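/- Let φ(ℕ) := {n ∈ ℕ, n ≥ 1 | ∃ x ≥ 1 with φ(x) = n} be the set of values of Euler's totient function. Then M(φ(ℕ)) = {1, 2, 4, 6, 8, 30, 70, 500, 900, 990, 5590, 9550, 555555555550}, where the last element is the number consisting of eleven digits 5 followed by a digit 0. -/

import Mathlib

/-!
Every value of `φ` other than `1` is even, and a value `φ x ≡ 2 (mod 4)` has the form
`p ^ k * (p - 1)` with `p ≡ 3 (mod 4)` prime: an odd prime power `p ^ v ∥ x` contributes the
even factor `p ^ (v - 1) * (p - 1)` to `φ x`, so the totient of the rest of `x` must be odd,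
hence `1`. The fourteen numbers `50, 550, …, 55555555550, 90, 590, 950, 5950` are `≡ 2 (mod 4)`
but not of this form, so they are not totient values.

Conversely, an even number containing none of the thirteen claimed elements as a subsequence has
no digit `1, 2, 4, 6, 8`, so it ends in `0`; before that only `0, 5, 9` can occur (`30`, `70`), a
further `0` would give `500` or `900`, and the patterns `990, 5590, 9550, 555555555550` leave
exactly the fourteen numbers above. As the thirteen elements are totient values
(`555555555551` is prime) and no one is a subsequence of another, they form the minimal set.
-/

/-- `Subseq x y` means the decimal digit string of `x` is a subsequence of that of `y`. -/
def Subseq (x y : ℕ) : Prop := (Nat.digits 10 x).Sublist (Nat.digits 10 y)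

/-- The minimal set of `S`: elements of `S` containing no smaller element of `S`
as a subsequence of their decimal digits. -/
def minimalSet (S : Set ℕ) : Set ℕ := {s ∈ S | ¬ ∃ n ∈ S, n < s ∧ Subseq n s}

open Nat

theorem Nat.totient_eq_one_or_even (x : ℕ) : φ x = 1 ∨ Even (φ x) := by
  rcases lt_or_ge 2 x with h | h
  · exact .inr (totient_even h)
  · interval_cases x <;> simp

theorem Nat.totient_eq_two_of_mod_four {x : ℕ} (h : φ x % 4 = 2)
    (h2 : ∀ p, p.Prime → p ∣ x → p = 2) : φ x = 2 := by
  have hx0 : x ≠ 0 := by rintro rfl; simp at h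
  obtain ⟨k, rfl⟩ : ∃ k, x = 2 ^ k := ⟨_, eq_prime_pow_of_unique_prime_dvd hx0 (h2 _)⟩
  match k with
  | 0 => simp at h
  | 1 => simp at h
  | 2 => rfl
  | k + 3 =>
    rw [totient_prime_pow_succ prime_two, pow_add] at h
    simp at h

theorem Nat.totient_eq_prime_pow_mul_of_mod_four {x p : ℕ} (h : φ x % 4 = 2) (hp : p.Prime)
    (hp2 : p ≠ 2) (hpx : p ∣ x) : p % 4 = 3 ∧ ∃ k, p ^ k * (p - 1) = φ x := by
  have hx0 : x ≠ 0 := by rintro rfl; simp at h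
  have hv : 0 < x.factorization p := hp.factorization_pos_of_dvd hx0 hpx
  have htot : φ x = p ^ (x.factorization p - 1) * (p - 1) * φ (x / p ^ x.factorization p) := by
    conv_lhs => rw [← ordProj_mul_ordCompl_eq_self x p]
    rw [totient_mul ((coprime_ordCompl hp hx0).pow_left _), totient_prime_pow hp hv]
  obtain ⟨a, ha⟩ : 2 ∣ p - 1 := by have := hp.eq_two_or_odd.resolve_left hp2; omega
  have hcompl : φ (x / p ^ x.factorization p) = 1 := by
    refine (totient_eq_one_or_even _).resolve_right fun ⟨c, hc⟩ => ?_
    have : 4 ∣ φ x := ⟨p ^ (x.factorization p - 1) * a * c, by rw [htot, ha, hc]; ring⟩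
    omega
  rw [hcompl, mul_one] at htot
  refine ⟨?_, _, htot.symm⟩
  by_contra hp3
  have : 4 ∣ φ x := htot ▸ Dvd.dvd.mul_left (by omega) _
  omega

theorem Nat.exists_prime_pow_mul_eq_totient_of_mod_four {x : ℕ} (h : φ x % 4 = 2) :
    ∃ p k, p.Prime ∧ p % 4 = 3 ∧ p ^ k * (p - 1) = φ x := by
  by_cases hodd : ∃ p, p.Prime ∧ p ≠ 2 ∧ p ∣ x
  · obtain ⟨p, hp, hp2, hpx⟩ := hodd
    obtain ⟨hp3, k, hk⟩ := totient_eq_prime_pow_mul_of_mod_four h hp hp2 hpx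
    exact ⟨p, k, hp, hp3, hk⟩
  · refine ⟨3, 0, prime_three, rfl, ?_⟩
    rw [totient_eq_two_of_mod_four h fun p hp hpx => by_contra fun hp2 => hodd ⟨p, hp, hp2, hpx⟩]
    rfl

-- `p ^ k * (p - 1) = n` forces `k = log p (n / (p - 1))`; this makes `hfac` checkable by
-- `norm_num`.
theorem Nat.totient_ne_of_mod_four {n : ℕ} (hn : n % 4 = 2) (hprime : ¬ (n + 1).Prime)
    (hfac : ∀ p ∈ n.primeFactorsList, p % 4 = 3 → p ^ log p (n / (p - 1)) * (p - 1) ≠ n)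
    (x : ℕ) : φ x ≠ n := by
  rintro rfl
  obtain ⟨p, k, hp, hp3, hpk⟩ := exists_prime_pow_mul_eq_totient_of_mod_four hn
  cases k with
  | zero =>
    rw [pow_zero, one_mul] at hpk
    exact hprime (by rwa [← hpk, Nat.sub_add_cancel hp.one_lt.le])
  | succ k =>
    have hmem : p ∈ (φ x).primeFactorsList :=
      (mem_primeFactorsList (by omega)).2 ⟨hp, hpk ▸ (dvd_pow_self p k.succ_ne_zero).mul_right _⟩
    refine hfac p hmem hp3 ?_
    rw [← hpk, Nat.mul_div_cancel _ (by omega : 0 < p - 1), Nat.log_pow hp.one_lt]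

theorem Nat.ofDigits_le_ofDigits_of_sublist {b : ℕ} (hb : 0 < b) {l₁ l₂ : List ℕ}
    (h : l₁.Sublist l₂) : ofDigits b l₁ ≤ ofDigits b l₂ := by
  induction h with
  | slnil => rfl
  | cons a _ ih =>
    calc ofDigits b _ ≤ ofDigits b _ := ih
      _ ≤ b * ofDigits b _ := Nat.le_mul_of_pos_left _ hb
      _ ≤ ofDigits b (a :: _) := by rw [ofDigits_cons]; omega
  | cons_cons a _ ih =>
    rw [ofDigits_cons, ofDigits_cons]
    gcongr

theorem Subseq.le {m n : ℕ} (h : Subseq m n) : m ≤ n := by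
  simpa only [ofDigits_digits] using ofDigits_le_ofDigits_of_sublist (by norm_num : 0 < 10) h

theorem Subseq.trans {l m n : ℕ} (h₁ : Subseq l m) (h₂ : Subseq m n) : Subseq l n :=
  List.Sublist.trans h₁ h₂

theorem subseq_iff_mem_digits {d n : ℕ} (hd0 : d ≠ 0) (hd : d < 10) :
    Subseq d n ↔ d ∈ digits 10 n := by
  rw [Subseq, digits_of_lt 10 d hd0 hd, List.singleton_sublist]

theorem Subseq.ten_mul {m n : ℕ} (hn : n ≠ 0) (h : Subseq m n) : Subseq (10 * m) (10 * n) := by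
  rcases m.eq_zero_or_pos with rfl | hm
  · simp [Subseq]
  · rw [Subseq, digits_base_mul (by norm_num) hm, digits_base_mul (by norm_num) (by omega)]
    exact h.cons_cons 0

theorem exists_subseq_ten_mul_of_zero_mem_digits {t : ℕ} (h0 : 0 ∈ digits 10 t) :
    ∃ d ∈ digits 10 t, d ≠ 0 ∧ Subseq (10 * d) t := by
  have hne : digits 10 t ≠ [] := List.ne_nil_of_mem h0
  have ht : t ≠ 0 := by rintro rfl; simp at h0
  set d := (digits 10 t).getLast hne
  have hd0 : d ≠ 0 := getLast_digit_ne_zero 10 ht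
  have hsplit := List.dropLast_append_getLast hne
  refine ⟨d, List.getLast_mem hne, hd0, ?_⟩
  have h0' : 0 ∈ (digits 10 t).dropLast := by
    rw [← hsplit, List.mem_append, List.mem_singleton] at h0
    exact h0.resolve_right (Ne.symm hd0)
  rw [Subseq, digits_base_mul (by norm_num) (by omega),
    digits_of_lt 10 d hd0 (digits_lt_base (by norm_num) (List.getLast_mem hne)), ← hsplit]
  exact (List.singleton_sublist.2 h0').append (List.Sublist.refl _)

theorem minimalSet_eq_of_forall_exists_subseq {S A : Set ℕ} (hAS : A ⊆ S)
    (hA : ∀ a ∈ A, ∀ b ∈ A, Subseq a b → a = b)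
    (hS : ∀ s ∈ S, s ∉ A → ∃ a ∈ A, Subseq a s) : minimalSet S = A := by
  ext s
  refine ⟨fun ⟨hsS, hmin⟩ => ?_, fun hsA => ⟨hAS hsA, ?_⟩⟩
  · by_contra hsA
    obtain ⟨a, ha, has⟩ := hS s hsS hsA
    exact hmin ⟨a, hAS ha, has.le.lt_of_ne (by rintro rfl; exact hsA ha), has⟩
  · rintro ⟨n, hnS, hns, hsub⟩
    by_cases hnA : n ∈ A
    · exact hns.ne (hA n hnA s hsA hsub)
    · obtain ⟨a, ha, han⟩ := hS n hnS hnA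
      obtain rfl := hA a ha s hsA (han.trans hsub)
      exact hns.not_ge han.le

theorem List.eq_replicate_or_mem_of_forall_eq_five_or_nine {L : List ℕ}
    (hL : ∀ d ∈ L, d = 5 ∨ d = 9) (h99 : ¬ [9, 9].Sublist L) (h955 : ¬ [9, 5, 5].Sublist L)
    (h559 : ¬ [5, 5, 9].Sublist L) :
    (∃ k, L = replicate k 5) ∨ L ∈ [[9], [5, 9], [9, 5], [5, 9, 5]] := by
  by_cases h9 : 9 ∈ L
  · right
    obtain ⟨A, B, rfl⟩ := List.append_of_mem h9
    have h9A : 9 ∉ A := fun h =>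
      h99 ((singleton_sublist.2 h).append (singleton_sublist.2 (by simp)))
    have h9B : 9 ∉ B := fun h =>
      h99 (((singleton_sublist.2 h).cons_cons 9).trans (sublist_append_right A _))
    obtain ⟨a, rfl⟩ : ∃ a, A = replicate a 5 := ⟨_, eq_replicate_of_mem fun d hd =>
      (hL d (by simp [hd])).resolve_right (by rintro rfl; exact h9A hd)⟩
    obtain ⟨b, rfl⟩ : ∃ b, B = replicate b 5 := ⟨_, eq_replicate_of_mem fun d hd =>
      (hL d (by simp [hd])).resolve_right (by rintro rfl; exact h9B hd)⟩
    have ha : a ≤ 1 := by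
      by_contra ha
      exact h559 (((replicate_sublist_replicate 5).2 (by omega : 2 ≤ a)).append
        ((nil_sublist _).cons_cons 9))
    have hb : b ≤ 1 := by
      by_contra hb
      exact h955 ((((replicate_sublist_replicate 5).2 (by omega : 2 ≤ b)).cons_cons 9).trans
        (sublist_append_right _ _))
    interval_cases a <;> interval_cases b <;> simp
  · left
    exact ⟨_, eq_replicate_of_mem fun d hd => (hL d hd).resolve_right (by rintro rfl; exact h9 hd)⟩

def totientValues : Set ℕ := {n | 1 ≤ n ∧ ∃ x, 1 ≤ x ∧ φ x = n}

def minimalTotients : Set ℕ := {1, 2, 4, 6, 8, 30, 70, 500, 900, 990, 5590, 9550, 555555555550}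

def exceptionalNontotients : Set ℕ :=
  {50, 550, 5550, 55550, 555550, 5555550, 55555550, 555555550, 5555555550, 55555555550,
    90, 590, 950, 5950}

theorem prime_555555555551 : Nat.Prime 555555555551 := by
  refine lucas_primality _ 17 (by reduce_mod_char) fun q hq hqd => ?_
  have hmem : q ∈ primeFactorsList 555555555550 := (mem_primeFactorsList (by norm_num)).2 ⟨hq, hqd⟩
  simp only [primeFactorsList_ofNat, List.mem_cons, List.not_mem_nil, or_false] at hmem
  rcases hmem with rfl | rfl | rfl | rfl | rfl <;> norm_num <;> reduce_mod_char <;> decide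

theorem totient_ne_of_mem_exceptionalNontotients {n : ℕ} (hn : n ∈ exceptionalNontotients)
    (x : ℕ) : φ x ≠ n := by
  simp only [exceptionalNontotients, Set.mem_insert_iff, Set.mem_singleton_iff] at hn
  rcases hn with rfl | rfl | rfl | rfl | rfl | rfl | rfl | rfl | rfl | rfl | rfl | rfl | rfl | rfl
    <;> refine totient_ne_of_mod_four (by norm_num) (by norm_num) ?_ x <;>
    simp only [primeFactorsList_ofNat, List.forall_mem_cons] <;> norm_num

theorem mem_fives_or_nines_of_forall_not_subseq {t : ℕ}
    (hdig : ∀ d ∈ digits 10 t, d = 0 ∨ d = 3 ∨ d = 5 ∨ d = 7 ∨ d = 9)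
    (h : ∀ a ∈ ({3, 7, 50, 90, 99, 559, 955, 55555555555} : Set ℕ), ¬ Subseq a t) :
    t ∈ ({0, 5, 55, 555, 5555, 55555, 555555, 5555555, 55555555, 555555555, 5555555555,
      9, 59, 95, 595} : Set ℕ) := by
  have hdig' : ∀ d ∈ digits 10 t, d = 0 ∨ d = 5 ∨ d = 9 := by
    intro d hd
    rcases hdig d hd with rfl | rfl | rfl | rfl | rfl
    · exact .inl rfl
    · exact absurd ((subseq_iff_mem_digits (by norm_num) (by norm_num)).2 hd) (h 3 (by simp))
    · exact .inr (.inl rfl)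
    · exact absurd ((subseq_iff_mem_digits (by norm_num) (by norm_num)).2 hd) (h 7 (by simp))
    · exact .inr (.inr rfl)
  have h0 : 0 ∉ digits 10 t := by
    intro h0
    obtain ⟨d, hd, hd0, hsub⟩ := exists_subseq_ten_mul_of_zero_mem_digits h0
    rcases hdig' d hd with rfl | rfl | rfl
    · exact hd0 rfl
    · exact h 50 (by simp) hsub
    · exact h 90 (by simp) hsub
  have h59 : ∀ d ∈ digits 10 t, d = 5 ∨ d = 9 := fun d hd =>
    (hdig' d hd).resolve_left (by rintro rfl; exact h0 hd)
  rw [← ofDigits_digits 10 t]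
  rcases List.eq_replicate_or_mem_of_forall_eq_five_or_nine h59
    (by simpa [Subseq] using h 99 (by simp)) (by simpa [Subseq] using h 559 (by simp))
    (by simpa [Subseq] using h 955 (by simp)) with ⟨k, hk⟩ | hmem
  · have hk10 : k ≤ 10 := by
      by_contra hk10
      refine h 55555555555 (by simp) ?_
      rw [Subseq, hk, show digits 10 55555555555 = List.replicate 11 5 by norm_num; rfl]
      exact (List.replicate_sublist_replicate 5).2 (by omega)
    rw [hk]
    interval_cases k <;> simp [ofDigits]
  · simp only [List.mem_cons, List.not_mem_nil, or_false] at hmem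
    rcases hmem with h | h | h | h <;> rw [h] <;> simp [ofDigits]

theorem mem_exceptionalNontotients_of_forall_not_subseq {s : ℕ} (hs0 : s ≠ 0) (heven : Even s)
    (h : ∀ a ∈ minimalTotients, ¬ Subseq a s) :
    s ∈ exceptionalNontotients := by
  have hdig : ∀ d ∈ digits 10 s, d = 0 ∨ d = 3 ∨ d = 5 ∨ d = 7 ∨ d = 9 := by
    intro d hd
    have hd10 : d < 10 := digits_lt_base (by norm_num) hd
    interval_cases d <;> simp <;>
      exact h _ (by simp [minimalTotients]) ((subseq_iff_mem_digits (by norm_num) hd10).2 hd)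
  have hlast : s % 10 = 0 := by
    have := hdig (s % 10) (by rw [digits_def' (by norm_num) (by omega)]; exact List.mem_cons_self)
    have := even_iff.1 heven
    omega
  obtain ⟨t, rfl⟩ : ∃ t, s = 10 * t := ⟨s / 10, by omega⟩
  have ht0 : t ≠ 0 := by rintro rfl; exact hs0 rfl
  have hdigits : digits 10 (10 * t) = 0 :: digits 10 t := digits_base_mul (by norm_num) (by omega)
  have ht := mem_fives_or_nines_of_forall_not_subseq
    (fun d hd => hdig d (by rw [hdigits]; exact List.mem_cons_of_mem _ hd))
    fun a ha hsub => h (10 * a) (by simp [minimalTotients] at ha ⊢; omega) (hsub.ten_mul ht0)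
  simp only [exceptionalNontotients, Set.mem_insert_iff, Set.mem_singleton_iff] at ht ⊢
  omega

theorem minimalTotients_subseq_antichain :
    ∀ a ∈ minimalTotients, ∀ b ∈ minimalTotients, Subseq a b → a = b := by
  simp only [minimalTotients, Set.mem_insert_iff, Set.mem_singleton_iff]
  rintro a ha b hb
  rcases ha with rfl | rfl | rfl | rfl | rfl | rfl | rfl | rfl | rfl | rfl | rfl | rfl | rfl <;>
    rcases hb with rfl | rfl | rfl | rfl | rfl | rfl | rfl | rfl | rfl | rfl | rfl | rfl | rfl <;>
    norm_num [Subseq] <;> decide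

theorem totient_mem_totientValues {x : ℕ} (hx : 0 < x) : φ x ∈ totientValues :=
  ⟨totient_pos.2 hx, x, hx, rfl⟩

theorem minimalTotients_subset_totientValues : minimalTotients ⊆ totientValues := by
  have h (p k : ℕ) (hp : p.Prime) : p ^ k * (p - 1) ∈ totientValues :=
    totient_prime_pow_succ hp k ▸ totient_mem_totientValues (pow_pos hp.pos _)
  have h900 : 900 ∈ totientValues := by
    have : φ (7 * 151) = 900 := by
      rw [totient_mul (by norm_num), totient_prime (by norm_num), totient_prime (by norm_num)]
    exact this ▸ totient_mem_totientValues (by norm_num)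
  simp only [minimalTotients, Set.insert_subset_iff, Set.singleton_subset_iff]
  exact ⟨h 2 0 prime_two, h 3 0 prime_three, h 5 0 (by norm_num), h 7 0 (by norm_num),
    h 2 3 prime_two, h 31 0 (by norm_num), h 71 0 (by norm_num), h 5 3 (by norm_num), h900,
    h 991 0 (by norm_num), h 5591 0 (by norm_num), h 9551 0 (by norm_num),
    h 555555555551 0 prime_555555555551⟩

theorem exists_subseq_of_mem_totientValues {s : ℕ} (hs : s ∈ totientValues)
    (hsA : s ∉ minimalTotients) : ∃ a ∈ minimalTotients, Subseq a s := by
  by_contra! h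
  obtain ⟨hs1, x, -, rfl⟩ := hs
  rcases totient_eq_one_or_even x with h1 | heven
  · exact hsA (by simp [h1, minimalTotients])
  · exact totient_ne_of_mem_exceptionalNontotients
      (mem_exceptionalNontotients_of_forall_not_subseq (by omega) heven h) x rfl

theorem minimalSet_totient_values :
    minimalSet {n : ℕ | 1 ≤ n ∧ ∃ x : ℕ, 1 ≤ x ∧ Nat.totient x = n} =
      {1, 2, 4, 6, 8, 30, 70, 500, 900, 990, 5590, 9550, 555555555550} := by
  exact minimalSet_eq_of_forall_exists_subseq minimalTotients_subset_totientValues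
    minimalTotients_subseq_antichain fun _ => exists_subseq_of_mem_totientValues
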